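/- arXiv:1605.01591 — 5 statements merged into one kernel-verified Lean document; each statement's English description precedes it below -/
import Mathlib

section
/- Let G be a group with elements g₁,…,g₅ and integers t_{ijk} (1 ≤ i < j < k ≤ 5) satisfying the listed commutator relations, and assume additionally t₁₂₃·t₃₄₅ = 0 and t₁₂₄·t₃₄₅ + t₁₄₅·t₂₃₄ = t₁₃₄·t₂₄₅. Then for all integers a₁,…,a₅,b₁,…,b₅ one has (g₁^{a₁}g₂^{a₂}g₃^{a₃}g₄^{a₄}g₅^{a₅})·(g₁^{b₁}g₂^{b₂}g₃^{b₃}g₄^{b₄}g₅^{b₅}) = g₁^{p₁}g₂^{p₂}g₃^{p₃}g₄^{p₄}g₅^{p₅}, where p₁ = a₁+b₁, p₂ = a₂+b₂, p₃ = a₃+b₃+t₁₂₃a₂b₁, p₄ = a₄+b₄+t₁₂₄a₂b₁+t₁₃₄a₃b₁+t₂₃₄a₃b₂+t₁₂₃t₁₃₄a₂s₂(b₁)+t₁₂₃t₂₃₄s₂(a₂)b₁+t₁₂₃t₂₃₄a₂b₁b₂, and p₅ = a₅+b₅+t₃₄₅a₄b₃+t₂₄₅a₄b₂+t₂₃₅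a₃b₂+t₁₄₅a₄b₁+t₁₃₅a₃b₁+t₁₂₅a₂b₁+t₂₃₄t₃₄₅s₂(a₃)b₂+t₂₃₄t₂₄₅a₃s₂(b₂)+t₁₃₄t₃₄₅s₂(a₃)b₁+t₁₃₄t₁₄₅a₃s₂(b₁)+t₂₃₄t₃₄₅a₃b₂b₃+t₁₃₄t₃₄₅a₃b₁b₃+t₁₃₄t₂₄₅a₃b₁b₂+t₁₂₄t₃₄₅a₂b₁b₃+t₁₂₄t₃₄₅a₂a₃b₁+(t₁₂₃t₂₃₅+t₁₂₄t₂₄₅)a₂b₁b₂+(t₁₂₃t₂₃₅+t₁₂₄t₂₄₅)s₂(a₂)b₁+(t₁₂₃t₁₃₅+t₁₂₄t₁₄₅)a₂s₂(b₁)+t₁₂₃t₂₃₄t₂₄₅a₂b₁s₂(b₂)+t₁₂₃t₁₃₄t₂₄₅s₂(a₂)s₂(b₁)+t₁₂₃t₂₃₄t₂₄₅s₃(a₂)b₁+t₁₂₃t₁₃₄t₁₄₅a₂s₃(b₁)+t₁₂₃t₂₃₄t₂₄₅s₂(a₂)b₁b₂+t₁₂₃t₁₃₄t₂₄₅a₂s₂(b₁)b₂.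 -/
/-!
The product of two normal forms is collected by moving the powers of the right-hand factor to
the left, one generator at a time. This only needs the commutation formulas
`gⱼ ^ m * gᵢ ^ n = gᵢ ^ n * (gⱼ ^ m * w)` for `i < j`, where `w` is a normal form in
`gⱼ₊₁, …, g₅`. By the relation `gⱼ gᵢ = gᵢ (gⱼ cᵢⱼ)`, conjugation by `gᵢ` turns `gⱼ ^ m` into
`(gⱼ cᵢⱼ) ^ m`; this power and the subsequent induction on `n` only involve commutation formulas
of the deeper layers, so the formulas are obtained layer by layer, following the nilpotency class
of the subgroup involved. The functions `s₂`, `s₃` arise as the sums `∑ k` and `∑ s₂ k` of these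
inductions. The first condition on the `t`'s is used as a case split, `t₁₂₃ = 0` or `t₃₄₅ = 0`;
in the second case the other condition reads `t₁₄₅ t₂₃₄ = t₁₃₄ t₂₄₅`, which the formula for
`g₂ ^ m * g₁ ^ n` needs: the `g₃`-part of `c₁₂` must produce the same power of `g₅` whether it
meets `g₁` or `g₂` first.
-/

def s2 (x : ℤ) : ℤ := x * (x - 1) / 2

def s3 (x : ℤ) : ℤ := x * (x - 1) * (x - 2) / 6

theorem two_mul_s2 (x : ℤ) : 2 * s2 x = x * (x - 1) :=
  Int.mul_ediv_cancel' (Int.even_mul_pred_self x).two_dvd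

theorem six_mul_s3 (x : ℤ) : 6 * s3 x = x * (x - 1) * (x - 2) := by
  refine Int.mul_ediv_cancel' (Int.dvd_of_emod_eq_zero ?_)
  have h : x % 6 = 0 ∨ x % 6 = 1 ∨ x % 6 = 2 ∨ x % 6 = 3 ∨ x % 6 = 4 ∨ x % 6 = 5 := by omega
  rcases h with h | h | h | h | h | h <;> simp [Int.mul_emod, Int.sub_emod, h]

@[simp] theorem s2_zero : s2 0 = 0 := rfl

theorem s2_one : s2 1 = 0 := rfl

@[simp] theorem s3_zero : s3 0 = 0 := rfl

theorem s2_add_one (x : ℤ) : s2 (x + 1) = s2 x + x :=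
  mul_left_cancel₀ two_ne_zero (by linear_combination two_mul_s2 (x + 1) - two_mul_s2 x)

theorem s3_add_one (x : ℤ) : s3 (x + 1) = s3 x + s2 x :=
  mul_left_cancel₀ (by norm_num : (6 : ℤ) ≠ 0)
    (by linear_combination six_mul_s3 (x + 1) - six_mul_s3 x - 3 * two_mul_s2 x)

section Collection

variable {G : Type*} [Group G]

theorem mul_eq_mul_mul_of_inv_mul_inv_mul_mul_eq {a b c : G} (h : b⁻¹ * a⁻¹ * b * a = c) :
    b * a = a * (b * c) := by
  rw [← h]; group

theorem commute_of_inv_mul_inv_mul_mul_eq_one {a b : G} (h : b⁻¹ * a⁻¹ * b * a = 1) :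
    Commute b a := by
  have h' := mul_eq_mul_mul_of_inv_mul_inv_mul_mul_eq h
  rwa [mul_one] at h'

theorem eq_mul_zpow_of_add_one {f : ℤ → G} {x : G} (h : ∀ n, f (n + 1) = f n * x) (n : ℤ) :
    f n = f 0 * x ^ n := by
  induction n using Int.induction_on with
  | zero => simp
  | succ k ih => rw [h, ih, mul_assoc, zpow_add_one]
  | pred k ih =>
    have step := h (-k - 1)
    rw [sub_add_cancel, ih] at step
    rw [zpow_sub_one, ← mul_assoc, step, mul_inv_cancel_right]

theorem zpow_mul_zpow_mul {a : G} (m n : ℤ) (w : G) : a ^ m * (a ^ n * w) = a ^ (m + n) * w := by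
  rw [← mul_assoc, zpow_add]

theorem Commute.zpow_mul_zpow {a b : G} (h : Commute a b) (m n : ℤ) :
    a ^ m * b ^ n = b ^ n * a ^ m :=
  (h.zpow_zpow m n).eq

theorem Commute.zpow_mul_zpow_mul {a b : G} (h : Commute a b) (m n : ℤ) (w : G) :
    a ^ m * (b ^ n * w) = b ^ n * (a ^ m * w) :=
  (h.zpow_zpow m n).left_comm w

theorem zpow_mul_zpow_of_nilpotency_class_two {x y z : G} {t : ℤ} (hzx : Commute z x)
    (hzy : Commute z y) (h : y * x = x * (y * z ^ t)) (m n : ℤ) :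
    y ^ m * x ^ n = x ^ n * (y ^ m * z ^ (t * m * n)) := by
  have hy : SemiconjBy x (y * z ^ t) y := h.symm
  have hx : SemiconjBy (y ^ m) x (x * z ^ (t * m)) := by
    rw [SemiconjBy, ← (hy.zpow_right m).eq, (hzy.symm.zpow_right t).mul_zpow, ← zpow_mul,
      mul_assoc, (hzy.zpow_zpow _ _).eq]
  rw [(hx.zpow_right n).eq, (hzx.symm.zpow_right _).mul_zpow, ← zpow_mul, mul_assoc,
    (hzy.zpow_zpow _ _).eq]

theorem zpow_mul_zpow_of_nilpotency_class_two_assoc {x y z : G} {t : ℤ} (hzx : Commute z x)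
    (hzy : Commute z y) (h : y * x = x * (y * z ^ t)) (m n : ℤ) (w : G) :
    y ^ m * (x ^ n * w) = x ^ n * (y ^ m * (z ^ (t * m * n) * w)) := by
  rw [← mul_assoc, zpow_mul_zpow_of_nilpotency_class_two hzx hzy h, mul_assoc, mul_assoc]

theorem mul_zpow_of_nilpotency_class_two {x u z : G} {α : ℤ} (hzx : Commute z x)
    (hzu : Commute z u) (h : u * x = x * (u * z ^ α)) (n : ℤ) :
    (x * u) ^ n = x ^ n * (u ^ n * z ^ (α * s2 n)) := by
  -- `x ^ 1` rather than `x`, so that the commutation rules, stated for powers, apply in the step.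
  have key := eq_mul_zpow_of_add_one (f := fun k => x ^ k * (u ^ k * z ^ (α * s2 k)))
    (x := x ^ (1 : ℤ) * u ^ (1 : ℤ)) (fun k => by
      simp only [mul_assoc, hzx.zpow_mul_zpow_mul, hzu.zpow_mul_zpow, hzu.zpow_mul_zpow_mul,
        zpow_mul_zpow_of_nilpotency_class_two_assoc hzx hzu h, zpow_mul_zpow_mul, ← zpow_add,
        s2_add_one]
      ring_nf) n
  simpa using key.symm

theorem zpow_mul_zpow_of_nilpotency_class_three {x y u z : G} {α β p q : ℤ}
    (hzx : Commute z x) (hzy : Commute z y) (hzu : Commute z u)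
    (hux : u * x = x * (u * z ^ α)) (huy : u * y = y * (u * z ^ β))
    (hyx : y * x = x * (y * (u ^ p * z ^ q))) (m n : ℤ) :
    y ^ m * x ^ n = x ^ n * (y ^ m * (u ^ (p * m * n) *
      z ^ (q * m * n + p * β * s2 m * n + p * α * m * s2 n))) := by
  have hup : u ^ p * y = y * (u ^ p * z ^ (β * p)) := by
    simpa using zpow_mul_zpow_of_nilpotency_class_two hzy hzu huy p 1
  have hpow : (y * (u ^ p * z ^ q)) ^ m = y ^ m * (u ^ (p * m) * z ^ (q * m + p * β * s2 m)) := by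
    rw [← mul_assoc, ((hzy.mul_right (hzu.zpow_right p)).symm.zpow_right q).mul_zpow,
      mul_zpow_of_nilpotency_class_two hzy (hzu.zpow_right p) hup]
    simp only [← zpow_mul, mul_assoc, ← zpow_add]
    ring_nf
  have hym : ∀ w, y ^ m * (x ^ (1 : ℤ) * w)
      = x ^ (1 : ℤ) * (y ^ m * (u ^ (p * m) * (z ^ (q * m + p * β * s2 m) * w))) := by
    intro w
    rw [zpow_one, ← mul_assoc, ← ((show SemiconjBy x _ y from hyx.symm).zpow_right m).eq, hpow]
    simp only [mul_assoc]
  have key := eq_mul_zpow_of_add_one (x := x ^ (1 : ℤ))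
    (f := fun k => x ^ k * (y ^ m * (u ^ (p * m * k) *
      z ^ (q * m * k + p * β * s2 m * k + p * α * m * s2 k)))) (fun k => by
      simp only [mul_assoc, hzx.zpow_mul_zpow, hzu.zpow_mul_zpow_mul, hym,
        zpow_mul_zpow_of_nilpotency_class_two_assoc hzx hzu hux, zpow_mul_zpow_mul, ← zpow_add,
        s2_add_one]
      ring_nf) n
  simpa using key.symm

theorem zpow_mul_zpow_of_nilpotency_class_three_assoc {x y u z : G} {α β p q : ℤ}
    (hzx : Commute z x) (hzy : Commute z y) (hzu : Commute z u)
    (hux : u * x = x * (u * z ^ α)) (huy : u * y = y * (u * z ^ β))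
    (hyx : y * x = x * (y * (u ^ p * z ^ q))) (m n : ℤ) (w : G) :
    y ^ m * (x ^ n * w) = x ^ n * (y ^ m * (u ^ (p * m * n) *
      (z ^ (q * m * n + p * β * s2 m * n + p * α * m * s2 n) * w))) := by
  rw [← mul_assoc, zpow_mul_zpow_of_nilpotency_class_three hzx hzy hzu hux huy hyx]
  simp only [mul_assoc]

theorem mul_zpow_of_nilpotency_class_three {x y u z : G} {α β p q : ℤ}
    (hzx : Commute z x) (hzy : Commute z y) (hzu : Commute z u)
    (hux : u * x = x * (u * z ^ α)) (huy : u * y = y * (u * z ^ β))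
    (hyx : y * x = x * (y * (u ^ p * z ^ q))) {a b c : ℤ} (haβ : a * β = 0) (m : ℤ) :
    (x * (y ^ a * (u ^ b * z ^ c))) ^ m = x ^ m * (y ^ (a * m) * (u ^ (b * m + a * p * s2 m) *
      z ^ (c * m + (a * q + b * α) * s2 m + a * p * α * s3 m))) := by
  have key := eq_mul_zpow_of_add_one (x := x ^ (1 : ℤ) * (y ^ a * (u ^ b * z ^ c)))
    (f := fun k => x ^ k * (y ^ (a * k) * (u ^ (b * k + a * p * s2 k) *
      z ^ (c * k + (a * q + b * α) * s2 k + a * p * α * s3 k)))) (fun k => by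
      rcases mul_eq_zero.mp haβ with h | h <;> subst h <;>
      simp only [mul_assoc, zpow_mul_zpow_mul, ← zpow_add, hzx.zpow_mul_zpow_mul,
        hzy.zpow_mul_zpow_mul, hzu.zpow_mul_zpow_mul,
        zpow_mul_zpow_of_nilpotency_class_two_assoc hzx hzu hux,
        zpow_mul_zpow_of_nilpotency_class_two_assoc hzy hzu huy,
        zpow_mul_zpow_of_nilpotency_class_three_assoc hzx hzy hzu hux huy hyx,
        s2_add_one, s3_add_one, zero_mul, mul_zero, s2_zero, s2_one] <;>
      ring_nf) m
  simpa using key.symm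

theorem zpow_mul_zpow_of_nilpotency_class_four {g1 g2 g3 g4 g5 : G}
    {t123 t124 t125 t134 t135 t145 t234 t235 t245 t345 : ℤ}
    (c51 : Commute g5 g1) (c52 : Commute g5 g2) (c53 : Commute g5 g3) (c54 : Commute g5 g4)
    (e41 : g4 * g1 = g1 * (g4 * g5 ^ t145)) (e42 : g4 * g2 = g2 * (g4 * g5 ^ t245))
    (e43 : g4 * g3 = g3 * (g4 * g5 ^ t345))
    (e31 : g3 * g1 = g1 * (g3 * (g4 ^ t134 * g5 ^ t135)))
    (e32 : g3 * g2 = g2 * (g3 * (g4 ^ t234 * g5 ^ t235)))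
    (e21 : g2 * g1 = g1 * (g2 * (g3 ^ t123 * g4 ^ t124 * g5 ^ t125)))
    (hcons1 : t123 * t345 = 0) (hcons2 : t124 * t345 + t145 * t234 = t134 * t245) (m n : ℤ) :
    g2 ^ m * g1 ^ n = g1 ^ n * (g2 ^ m * (g3 ^ (t123 * m * n) *
      (g4 ^ (t124 * m * n + t123 * t234 * s2 m * n + t123 * t134 * m * s2 n) *
        g5 ^ (t125 * m * n + (t123 * t235 + t124 * t245) * s2 m * n
          + (t123 * t135 + t124 * t145) * m * s2 n + t123 * t234 * t245 * s3 m * n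
          + t123 * t134 * t145 * m * s3 n + t123 * t134 * t245 * s2 m * s2 n)))) := by
  have h21 : ∀ w, g2 ^ m * (g1 ^ (1 : ℤ) * w)
      = g1 ^ (1 : ℤ) * ((g2 * (g3 ^ t123 * g4 ^ t124 * g5 ^ t125)) ^ m * w) := fun w => by
    rw [zpow_one, ← mul_assoc, ← ((show SemiconjBy g1 _ g2 from e21.symm).zpow_right m).eq,
      mul_assoc]
  have key := eq_mul_zpow_of_add_one (x := g1 ^ (1 : ℤ))
    (f := fun k => g1 ^ k * (g2 ^ m * (g3 ^ (t123 * m * k) *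
      (g4 ^ (t124 * m * k + t123 * t234 * s2 m * k + t123 * t134 * m * s2 k) *
        g5 ^ (t125 * m * k + (t123 * t235 + t124 * t245) * s2 m * k
          + (t123 * t135 + t124 * t145) * m * s2 k + t123 * t234 * t245 * s3 m * k
          + t123 * t134 * t145 * m * s3 k + t123 * t134 * t245 * s2 m * s2 k)))))
    (fun k => by
      rcases mul_eq_zero.mp hcons1 with h | h <;> subst h <;>
      simp only [mul_assoc, zpow_mul_zpow_mul, ← zpow_add, c51.zpow_mul_zpow,
        c53.zpow_mul_zpow_mul, c54.zpow_mul_zpow_mul, h21,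
        mul_zpow_of_nilpotency_class_three c52 c53 c54 e42 e43 e32 hcons1,
        zpow_mul_zpow_of_nilpotency_class_two_assoc c51 c54 e41,
        zpow_mul_zpow_of_nilpotency_class_two_assoc c53 c54 e43,
        zpow_mul_zpow_of_nilpotency_class_three_assoc c51 c53 c54 e41 e43 e31,
        s2_add_one, s3_add_one, zero_mul, mul_zero, s2_zero, s2_one]
      · ring_nf
      · congrm g1 ^ ?_ * (g2 ^ ?_ * (g3 ^ ?_ * (g4 ^ ?_ * g5 ^ ?_)))
        iterate 4 ring
        linear_combination (-(k * t123 * s2 m)) * hcons2) n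
  simpa using key.symm

theorem zpow_mul_zpow_of_nilpotency_class_four_assoc {g1 g2 g3 g4 g5 : G}
    {t123 t124 t125 t134 t135 t145 t234 t235 t245 t345 : ℤ}
    (c51 : Commute g5 g1) (c52 : Commute g5 g2) (c53 : Commute g5 g3) (c54 : Commute g5 g4)
    (e41 : g4 * g1 = g1 * (g4 * g5 ^ t145)) (e42 : g4 * g2 = g2 * (g4 * g5 ^ t245))
    (e43 : g4 * g3 = g3 * (g4 * g5 ^ t345))
    (e31 : g3 * g1 = g1 * (g3 * (g4 ^ t134 * g5 ^ t135)))
    (e32 : g3 * g2 = g2 * (g3 * (g4 ^ t234 * g5 ^ t235)))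
    (e21 : g2 * g1 = g1 * (g2 * (g3 ^ t123 * g4 ^ t124 * g5 ^ t125)))
    (hcons1 : t123 * t345 = 0) (hcons2 : t124 * t345 + t145 * t234 = t134 * t245)
    (m n : ℤ) (w : G) :
    g2 ^ m * (g1 ^ n * w) = g1 ^ n * (g2 ^ m * (g3 ^ (t123 * m * n) *
      (g4 ^ (t124 * m * n + t123 * t234 * s2 m * n + t123 * t134 * m * s2 n) *
        (g5 ^ (t125 * m * n + (t123 * t235 + t124 * t245) * s2 m * n
          + (t123 * t135 + t124 * t145) * m * s2 n + t123 * t234 * t245 * s3 m * n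
          + t123 * t134 * t145 * m * s3 n + t123 * t134 * t245 * s2 m * s2 n) * w)))) := by
  rw [← mul_assoc, zpow_mul_zpow_of_nilpotency_class_four c51 c52 c53 c54 e41 e42 e43 e31 e32 e21
    hcons1 hcons2]
  simp only [mul_assoc]

end Collection

/-- Hall polynomials for torsion free nilpotent groups of Hirsch length 5:
multiplication of normal forms is given by the polynomials `p₁,…,p₅`. -/
theorem hall_polynomials_length_five (G : Type*) [Group G] (g1 g2 g3 g4 g5 : G)
    (t123 t124 t125 t134 t135 t145 t234 t235 t245 t345 : ℤ)
    (h21 : g2⁻¹ * g1⁻¹ * g2 * g1 = g3 ^ t123 * g4 ^ t124 * g5 ^ t125)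
    (h31 : g3⁻¹ * g1⁻¹ * g3 * g1 = g4 ^ t134 * g5 ^ t135)
    (h32 : g3⁻¹ * g2⁻¹ * g3 * g2 = g4 ^ t234 * g5 ^ t235)
    (h41 : g4⁻¹ * g1⁻¹ * g4 * g1 = g5 ^ t145)
    (h42 : g4⁻¹ * g2⁻¹ * g4 * g2 = g5 ^ t245)
    (h43 : g4⁻¹ * g3⁻¹ * g4 * g3 = g5 ^ t345)
    (h51 : g5⁻¹ * g1⁻¹ * g5 * g1 = 1)
    (h52 : g5⁻¹ * g2⁻¹ * g5 * g2 = 1)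
    (h53 : g5⁻¹ * g3⁻¹ * g5 * g3 = 1)
    (h54 : g5⁻¹ * g4⁻¹ * g5 * g4 = 1)
    (hcons1 : t123 * t345 = 0)
    (hcons2 : t124 * t345 + t145 * t234 = t134 * t245) :
    ∀ a1 a2 a3 a4 a5 b1 b2 b3 b4 b5 : ℤ,
      (g1 ^ a1 * g2 ^ a2 * g3 ^ a3 * g4 ^ a4 * g5 ^ a5) *
        (g1 ^ b1 * g2 ^ b2 * g3 ^ b3 * g4 ^ b4 * g5 ^ b5) =
      g1 ^ (a1 + b1) * g2 ^ (a2 + b2) * g3 ^ (a3 + b3 + t123 * a2 * b1) *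
      g4 ^ (a4 + b4 + t124 * a2 * b1 + t134 * a3 * b1 + t234 * a3 * b2
            + t123 * t134 * a2 * s2 b1 + t123 * t234 * s2 a2 * b1
            + t123 * t234 * a2 * b1 * b2) *
      g5 ^ (a5 + b5
            + t345 * a4 * b3 + t245 * a4 * b2 + t235 * a3 * b2
            + t145 * a4 * b1 + t135 * a3 * b1 + t125 * a2 * b1
            + t234 * t345 * s2 a3 * b2 + t234 * t245 * a3 * s2 b2
            + t134 * t345 * s2 a3 * b1 + t134 * t145 * a3 * s2 b1
            + t234 * t345 * a3 * b2 * b3 + t134 * t345 * a3 * b1 * b3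
            + t134 * t245 * a3 * b1 * b2 + t124 * t345 * a2 * b1 * b3
            + t124 * t345 * a2 * a3 * b1
            + (t123 * t235 + t124 * t245) * a2 * b1 * b2
            + (t123 * t235 + t124 * t245) * s2 a2 * b1
            + (t123 * t135 + t124 * t145) * a2 * s2 b1
            + t123 * t234 * t245 * a2 * b1 * s2 b2
            + t123 * t134 * t245 * s2 a2 * s2 b1
            + t123 * t234 * t245 * s3 a2 * b1
            + t123 * t134 * t145 * a2 * s3 b1
            + t123 * t234 * t245 * s2 a2 * b1 * b2
            + t123 * t134 * t245 * a2 * s2 b1 * b2) := by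
  have c51 := commute_of_inv_mul_inv_mul_mul_eq_one h51
  have c52 := commute_of_inv_mul_inv_mul_mul_eq_one h52
  have c53 := commute_of_inv_mul_inv_mul_mul_eq_one h53
  have c54 := commute_of_inv_mul_inv_mul_mul_eq_one h54
  have e41 := mul_eq_mul_mul_of_inv_mul_inv_mul_mul_eq h41
  have e42 := mul_eq_mul_mul_of_inv_mul_inv_mul_mul_eq h42
  have e43 := mul_eq_mul_mul_of_inv_mul_inv_mul_mul_eq h43
  have e31 := mul_eq_mul_mul_of_inv_mul_inv_mul_mul_eq h31
  have e32 := mul_eq_mul_mul_of_inv_mul_inv_mul_mul_eq h32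
  have e21 := mul_eq_mul_mul_of_inv_mul_inv_mul_mul_eq h21
  intro a1 a2 a3 a4 a5 b1 b2 b3 b4 b5
  rcases mul_eq_zero.mp hcons1 with h | h <;> subst h <;>
    simp only [mul_assoc, zpow_mul_zpow_mul, ← zpow_add, c51.zpow_mul_zpow_mul,
      c52.zpow_mul_zpow_mul, c53.zpow_mul_zpow_mul, c54.zpow_mul_zpow_mul,
      zpow_mul_zpow_of_nilpotency_class_two_assoc c51 c54 e41,
      zpow_mul_zpow_of_nilpotency_class_two_assoc c52 c54 e42,
      zpow_mul_zpow_of_nilpotency_class_two_assoc c53 c54 e43,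
      zpow_mul_zpow_of_nilpotency_class_three_assoc c51 c53 c54 e41 e43 e31,
      zpow_mul_zpow_of_nilpotency_class_three_assoc c52 c53 c54 e42 e43 e32,
      zpow_mul_zpow_of_nilpotency_class_four_assoc c51 c52 c53 c54 e41 e42 e43 e31 e32 e21
        hcons1 hcons2, zero_mul, mul_zero, s2_zero] <;>
    ring_nf
end

section
/- Let G be a group with elements h₁,…,h₅ and integers t_{ijk} (1 ≤ i < j < k ≤ 5) satisfying the listed commutator relations, and suppose the normal-form map ℤ⁵ → G, (a₁,…,a₅) ↦ h₁^{a₁}h₂^{a₂}h₃^{a₃}h₄^{a₄}h₅^{a₅}, is injective. Then t₁₂₃·t₃₄₅ = 0 and t₁₂₄·t₃₄₅ + t₁₄₅·t₂₃₄ = t₁₃₄·t₂₄₅. -/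
lemma swap_core {G : Type*} [Group G] {a b c : G} (hcb : Commute c b)
    (h : b * a = a * b * c) (n : ℤ) : b ^ n * a = a * (b ^ n * c ^ n) := by
  have key : a⁻¹ * b * a = b * c := by
    rw [mul_assoc, h]; group
  have h2 : (a⁻¹ * b * a) ^ n = a⁻¹ * b ^ n * a := by
    have := conj_zpow (i := n) (a := a⁻¹) (b := b)
    simpa using this
  have h3 : a⁻¹ * b ^ n * a = b ^ n * c ^ n := by
    rw [← h2, key, (hcb.symm).mul_zpow]
  calc b ^ n * a = a * (a⁻¹ * b ^ n * a) := by group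
    _ = a * (b ^ n * c ^ n) := by rw [h3]

lemma swap_core2 {G : Type*} [Group G] {a b c : G} (hca : Commute c a) (hcb : Commute c b)
    (h : b * a = a * b * c) (n m : ℤ) : b ^ n * a ^ m = a ^ m * (b ^ n * c ^ (n * m)) := by
  have h1 := swap_core hcb h n
  have h2 : a * b ^ n = b ^ n * a * (c ^ n)⁻¹ := by
    rw [h1]; group
  have h3 := swap_core (a := b ^ n) (b := a) (c := (c ^ n)⁻¹)
    ((hca.zpow_left n).inv_left) h2 m
  have hX : ((c ^ n)⁻¹) ^ m = (c ^ (n * m))⁻¹ := by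
    rw [inv_zpow, ← zpow_mul]
  rw [hX] at h3
  calc b ^ n * a ^ m = b ^ n * (a ^ m * (c ^ (n * m))⁻¹) * c ^ (n * m) := by group
    _ = a ^ m * b ^ n * c ^ (n * m) := by rw [← h3]
    _ = a ^ m * (b ^ n * c ^ (n * m)) := by group

/-- If the normal-form map of a group with generators `h₁,…,h₅` satisfying the nilpotent
commutator relations is injective, then the structure constants satisfy the two
consistency equations. -/
theorem consistency_relations_of_injective (G : Type*) [Group G] (h1 h2 h3 h4 h5 : G)
    (t123 t124 t125 t134 t135 t145 t234 t235 t245 t345 : ℤ)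
    (c21 : h2⁻¹ * h1⁻¹ * h2 * h1 = h3 ^ t123 * h4 ^ t124 * h5 ^ t125)
    (c31 : h3⁻¹ * h1⁻¹ * h3 * h1 = h4 ^ t134 * h5 ^ t135)
    (c32 : h3⁻¹ * h2⁻¹ * h3 * h2 = h4 ^ t234 * h5 ^ t235)
    (c41 : h4⁻¹ * h1⁻¹ * h4 * h1 = h5 ^ t145)
    (c42 : h4⁻¹ * h2⁻¹ * h4 * h2 = h5 ^ t245)
    (c43 : h4⁻¹ * h3⁻¹ * h4 * h3 = h5 ^ t345)
    (c51 : h5⁻¹ * h1⁻¹ * h5 * h1 = 1)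
    (c52 : h5⁻¹ * h2⁻¹ * h5 * h2 = 1)
    (c53 : h5⁻¹ * h3⁻¹ * h5 * h3 = 1)
    (c54 : h5⁻¹ * h4⁻¹ * h5 * h4 = 1)
    (hinj : Function.Injective
      (fun a : Fin 5 → ℤ => h1 ^ a 0 * h2 ^ a 1 * h3 ^ a 2 * h4 ^ a 3 * h5 ^ a 4)) :
    t123 * t345 = 0 ∧ t124 * t345 + t145 * t234 = t134 * t245 := by
  -- basic single swaps
  have s21 : h2 * h1 = h1 * h2 * (h3 ^ t123 * h4 ^ t124 * h5 ^ t125) := by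
    calc h2 * h1 = h1 * h2 * (h2⁻¹ * h1⁻¹ * h2 * h1) := by group
      _ = _ := by rw [c21]
  have s31 : h3 * h1 = h1 * h3 * (h4 ^ t134 * h5 ^ t135) := by
    calc h3 * h1 = h1 * h3 * (h3⁻¹ * h1⁻¹ * h3 * h1) := by group
      _ = _ := by rw [c31]
  have s32 : h3 * h2 = h2 * h3 * (h4 ^ t234 * h5 ^ t235) := by
    calc h3 * h2 = h2 * h3 * (h3⁻¹ * h2⁻¹ * h3 * h2) := by group
      _ = _ := by rw [c32]
  have s41 : h4 * h1 = h1 * h4 * h5 ^ t145 := by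
    calc h4 * h1 = h1 * h4 * (h4⁻¹ * h1⁻¹ * h4 * h1) := by group
      _ = _ := by rw [c41]
  have s42 : h4 * h2 = h2 * h4 * h5 ^ t245 := by
    calc h4 * h2 = h2 * h4 * (h4⁻¹ * h2⁻¹ * h4 * h2) := by group
      _ = _ := by rw [c42]
  have s43 : h4 * h3 = h3 * h4 * h5 ^ t345 := by
    calc h4 * h3 = h3 * h4 * (h4⁻¹ * h3⁻¹ * h4 * h3) := by group
      _ = _ := by rw [c43]
  -- h5 is central among the generators
  have com51 : Commute h5 h1 := by
    have : h5 * h1 = h1 * h5 * (h5⁻¹ * h1⁻¹ * h5 * h1) := by group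
    rw [c51, mul_one] at this; exact this
  have com52 : Commute h5 h2 := by
    have : h5 * h2 = h2 * h5 * (h5⁻¹ * h2⁻¹ * h5 * h2) := by group
    rw [c52, mul_one] at this; exact this
  have com53 : Commute h5 h3 := by
    have : h5 * h3 = h3 * h5 * (h5⁻¹ * h3⁻¹ * h5 * h3) := by group
    rw [c53, mul_one] at this; exact this
  have com54 : Commute h5 h4 := by
    have : h5 * h4 = h4 * h5 * (h5⁻¹ * h4⁻¹ * h5 * h4) := by group
    rw [c54, mul_one] at this; exact this
  -- move a power of h5 left past generators (rules: smaller generator to the left)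
  have r51 : ∀ (k : ℤ) (x : G), h5 ^ k * (h1 * x) = h1 * (h5 ^ k * x) := fun k x => by
    rw [← mul_assoc, (com51.zpow_left k).eq, mul_assoc]
  have r52 : ∀ (k : ℤ) (x : G), h5 ^ k * (h2 * x) = h2 * (h5 ^ k * x) := fun k x => by
    rw [← mul_assoc, (com52.zpow_left k).eq, mul_assoc]
  have r53 : ∀ (k : ℤ) (x : G), h5 ^ k * (h3 * x) = h3 * (h5 ^ k * x) := fun k x => by
    rw [← mul_assoc, (com53.zpow_left k).eq, mul_assoc]
  have r53p : ∀ (k a : ℤ) (x : G), h5 ^ k * (h3 ^ a * x) = h3 ^ a * (h5 ^ k * x) := fun k a x => by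
    rw [← mul_assoc, ((com53.zpow_left k).zpow_right a).eq, mul_assoc]
  have r54 : ∀ (k : ℤ) (x : G), h5 ^ k * (h4 * x) = h4 * (h5 ^ k * x) := fun k x => by
    rw [← mul_assoc, (com54.zpow_left k).eq, mul_assoc]
  have r54p : ∀ (k m : ℤ) (x : G), h5 ^ k * (h4 ^ m * x) = h4 ^ m * (h5 ^ k * x) := fun k m x => by
    rw [← mul_assoc, ((com54.zpow_left k).zpow_right m).eq, mul_assoc]
  have r51e : ∀ (k : ℤ), h5 ^ k * h1 = h1 * h5 ^ k := fun k => (com51.zpow_left k).eq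
  have r54e : ∀ (k m : ℤ), h5 ^ k * h4 ^ m = h4 ^ m * h5 ^ k := fun k m =>
    ((com54.zpow_left k).zpow_right m).eq
  -- swap rules, continuation form
  have w21 : ∀ x : G, h2 * (h1 * x) = h1 * (h2 * (h3 ^ t123 * (h4 ^ t124 * (h5 ^ t125 * x)))) :=
    fun x => by rw [← mul_assoc, s21]; group
  have w31 : ∀ x : G, h3 * (h1 * x) = h1 * (h3 * (h4 ^ t134 * (h5 ^ t135 * x))) :=
    fun x => by rw [← mul_assoc, s31]; group
  have w32 : ∀ x : G, h3 * (h2 * x) = h2 * (h3 * (h4 ^ t234 * (h5 ^ t235 * x))) :=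
    fun x => by rw [← mul_assoc, s32]; group
  have w41 : ∀ x : G, h4 * (h1 * x) = h1 * (h4 * (h5 ^ t145 * x)) :=
    fun x => by rw [← mul_assoc, s41]; group
  have w42 : ∀ x : G, h4 * (h2 * x) = h2 * (h4 * (h5 ^ t245 * x)) :=
    fun x => by rw [← mul_assoc, s42]; group
  have w43 : ∀ x : G, h4 * (h3 * x) = h3 * (h4 * (h5 ^ t345 * x)) :=
    fun x => by rw [← mul_assoc, s43]; group
  -- powered swap rules
  have p41 : ∀ (m : ℤ) (x : G), h4 ^ m * (h1 * x) = h1 * (h4 ^ m * (h5 ^ (t145 * m) * x)) :=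
    fun m x => by
      have := swap_core (a := h1) (b := h4) (c := h5 ^ t145) (com54.zpow_left t145)
        (by rw [s41]) m
      rw [← zpow_mul, mul_comm t145 m] at this
      rw [← mul_assoc, this]; group
  have p42 : ∀ (m : ℤ) (x : G), h4 ^ m * (h2 * x) = h2 * (h4 ^ m * (h5 ^ (t245 * m) * x)) :=
    fun m x => by
      have := swap_core (a := h2) (b := h4) (c := h5 ^ t245) (com54.zpow_left t245)
        (by rw [s42]) m
      rw [← zpow_mul, mul_comm t245 m] at this
      rw [← mul_assoc, this]; group
  have hc345_3 : Commute (h5 ^ t345) h3 := (com53.zpow_left t345)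
  have hc345_4 : Commute (h5 ^ t345) h4 := (com54.zpow_left t345)
  have p43 : ∀ (m : ℤ) (x : G), h4 ^ m * (h3 * x) = h3 * (h4 ^ m * (h5 ^ (t345 * m) * x)) :=
    fun m x => by
      have := swap_core (a := h3) (b := h4) (c := h5 ^ t345) hc345_4 (by rw [s43]) m
      rw [← zpow_mul, mul_comm t345 m] at this
      rw [← mul_assoc, this]; group
  have p43p : ∀ (m a : ℤ) (x : G),
      h4 ^ m * (h3 ^ a * x) = h3 ^ a * (h4 ^ m * (h5 ^ (t345 * (m * a)) * x)) :=
    fun m a x => by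
      have := swap_core2 (a := h3) (b := h4) (c := h5 ^ t345) hc345_3 hc345_4 (by rw [s43]) m a
      rw [← zpow_mul, mul_comm t345 (m * a)] at this
      rw [← mul_assoc, this]; group
  have w43p : ∀ (a : ℤ) (x : G), h4 * (h3 ^ a * x) = h3 ^ a * (h4 * (h5 ^ (t345 * a) * x)) :=
    fun a x => by
      have := p43p 1 a x
      simpa using this
  -- merge rules
  have mrg3 : ∀ (a : ℤ) (x : G), h3 * (h3 ^ a * x) = h3 ^ (1 + a) * x := fun a x => by
    rw [← mul_assoc, ← zpow_one_add]
  have mrg4 : ∀ (m : ℤ) (x : G), h4 * (h4 ^ m * x) = h4 ^ (1 + m) * x := fun m x => by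
    rw [← mul_assoc, ← zpow_one_add]
  have mrg4p : ∀ (m k : ℤ) (x : G), h4 ^ m * (h4 ^ k * x) = h4 ^ (m + k) * x := fun m k x => by
    rw [← mul_assoc, ← zpow_add]
  have mrg5 : ∀ (c d : ℤ) (x : G), h5 ^ c * (h5 ^ d * x) = h5 ^ (c + d) * x := fun c d x => by
    rw [← mul_assoc, ← zpow_add]
  have mrg5e : ∀ (c d : ℤ), h5 ^ c * h5 ^ d = h5 ^ (c + d) := fun c d => (zpow_add h5 c d).symm
  have mrg4r : ∀ (m : ℤ) (x : G), h4 ^ m * (h4 * x) = h4 ^ (m + 1) * x := fun m x => by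
    rw [← mul_assoc, ← zpow_add_one]
  have mrg3r : ∀ (a : ℤ) (x : G), h3 ^ a * (h3 * x) = h3 ^ (a + 1) * x := fun a x => by
    rw [← mul_assoc, ← zpow_add_one]
  -- the simp set used for normalization
  have linkA : h4 * (h2 * h1) = h2 * (h4 * (h5 ^ t245 * h1)) := by
    rw [← mul_assoc, s42]; group
  have linkB : h3 * (h2 * h1) = h2 * (h3 * (h4 ^ t234 * (h5 ^ t235 * h1))) := by
    rw [← mul_assoc, s32]; group
  have eA1 : h1 ^ (1:ℤ) * h2 ^ (1:ℤ) * h3 ^ t123 * h4 ^ (1 + t124) *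
      h5 ^ (t345 * t123 + (t245 + (t145 + t125))) = h4 * (h2 * h1) := by
    simp only [zpow_one, mul_assoc, s21, w21, w31, w32, w41, w42, w43, w43p, p41, p42, p43, p43p,
      r51, r52, r53, r53p, r54, r54p, r51e, r54e, mrg3, mrg4, mrg4p, mrg5, mrg5e, mrg4r, mrg3r]
  have eA2 : h1 ^ (1:ℤ) * h2 ^ (1:ℤ) * h3 ^ t123 * h4 ^ (t124 + 1) *
      h5 ^ (t125 + (t145 + t245)) = h2 * (h4 * (h5 ^ t245 * h1)) := by
    simp only [zpow_one, mul_assoc, s21, w21, w31, w32, w41, w42, w43, w43p, p41, p42, p43, p43p,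
      r51, r52, r53, r53p, r54, r54p, r51e, r54e, mrg3, mrg4, mrg4p, mrg5, mrg5e, mrg4r, mrg3r]
  have eB1 : h1 ^ (1:ℤ) * h2 ^ (1:ℤ) * h3 ^ (1 + t123) * h4 ^ (t234 + (t134 + t124)) *
      h5 ^ (t345 * (t234 * t123) + (t235 + (t345 * (t134 * t123) + (t245 * t134 + (t135 + t125)))))
      = h3 * (h2 * h1) := by
    simp only [zpow_one, mul_assoc, s21, w21, w31, w32, w41, w42, w43, w43p, p41, p42, p43, p43p,
      r51, r52, r53, r53p, r54, r54p, r51e, r54e, mrg3, mrg4, mrg4p, mrg5, mrg5e, mrg4r, mrg3r]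
  have eB2 : h1 ^ (1:ℤ) * h2 ^ (1:ℤ) * h3 ^ (t123 + 1) * h4 ^ (t124 + (t134 + t234)) *
      h5 ^ (t345 * t124 + (t125 + (t135 + (t145 * t234 + t235))))
      = h2 * (h3 * (h4 ^ t234 * (h5 ^ t235 * h1))) := by
    simp only [zpow_one, mul_assoc, s21, w21, w31, w32, w41, w42, w43, w43p, p41, p42, p43, p43p,
      r51, r52, r53, r53p, r54, r54p, r51e, r54e, mrg3, mrg4, mrg4p, mrg5, mrg5e, mrg4r, mrg3r]
  have hA : (![1, 1, t123, 1 + t124, t345 * t123 + (t245 + (t145 + t125))] : Fin 5 → ℤ) =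
      ![1, 1, t123, t124 + 1, t125 + (t145 + t245)] := by
    apply hinj
    show h1 ^ (1:ℤ) * h2 ^ (1:ℤ) * h3 ^ t123 * h4 ^ (1 + t124) *
        h5 ^ (t345 * t123 + (t245 + (t145 + t125)))
      = h1 ^ (1:ℤ) * h2 ^ (1:ℤ) * h3 ^ t123 * h4 ^ (t124 + 1) * h5 ^ (t125 + (t145 + t245))
    rw [eA1, eA2, linkA]
  have hB : (![1, 1, 1 + t123, t234 + (t134 + t124),
        t345 * (t234 * t123) + (t235 + (t345 * (t134 * t123) + (t245 * t134 + (t135 + t125))))]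
        : Fin 5 → ℤ) =
      ![1, 1, t123 + 1, t124 + (t134 + t234),
        t345 * t124 + (t125 + (t135 + (t145 * t234 + t235)))] := by
    apply hinj
    show h1 ^ (1:ℤ) * h2 ^ (1:ℤ) * h3 ^ (1 + t123) * h4 ^ (t234 + (t134 + t124)) *
        h5 ^ (t345 * (t234 * t123) + (t235 + (t345 * (t134 * t123) + (t245 * t134 + (t135 + t125)))))
      = h1 ^ (1:ℤ) * h2 ^ (1:ℤ) * h3 ^ (t123 + 1) * h4 ^ (t124 + (t134 + t234)) *
        h5 ^ (t345 * t124 + (t125 + (t135 + (t145 * t234 + t235))))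
    rw [eB1, eB2, linkB]
  have hA4 := congrFun hA 4
  have hB4 := congrFun hB 4
  simp only [Matrix.cons_val_four, Matrix.tail_cons, Matrix.head_cons] at hA4 hB4
  have g1 : t123 * t345 = 0 := by linarith [hA4]
  refine ⟨g1, ?_⟩
  have g1' : t345 * t123 = 0 := by linarith [hA4]
  linear_combination (-1 : ℤ) * hB4 + (t234 + t134) * g1'
end

section
/- For every t ∈ ℤ⁴ with coordinates t_{ijk} (1 ≤ i < j < k ≤ 4), the presented group G(t) on generators g₁,…,g₄ with relations ⁅g_j,g_i⁆ = g_{j+1}^{t_{i,j,j+1}} ··· g₄^{t_{i,j,4}} for 1 ≤ i < j ≤ 4 is consistent; that is, the normal-form map ℤ⁴ → G(t), (a₁,…,a₄) ↦ g₁^{a₁}g₂^{a₂}g₃^{a₃}g₄^{a₄}, is injective. -/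
/-- The relators of the presentation `G(t)` on four generators: for each `1 ≤ i < j ≤ 4`
the relator `⁅g_j,g_i⁆⁻¹ · g_{j+1}^{t_{i,j,j+1}} ⋯ g₄^{t_{i,j,4}}`,
where `⁅a,b⁆ = a⁻¹b⁻¹ab`. -/
def rels4 (t123 t124 t134 t234 : ℤ) : Set (FreeGroup (Fin 4)) :=
  let g : Fin 4 → FreeGroup (Fin 4) := FreeGroup.of
  { ((g 1)⁻¹ * (g 0)⁻¹ * g 1 * g 0)⁻¹ * (g 2 ^ t123 * g 3 ^ t124),
    ((g 2)⁻¹ * (g 0)⁻¹ * g 2 * g 0)⁻¹ * g 3 ^ t134,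
    ((g 2)⁻¹ * (g 1)⁻¹ * g 2 * g 1)⁻¹ * g 3 ^ t234,
    ((g 3)⁻¹ * (g 0)⁻¹ * g 3 * g 0)⁻¹,
    ((g 3)⁻¹ * (g 1)⁻¹ * g 3 * g 1)⁻¹,
    ((g 3)⁻¹ * (g 2)⁻¹ * g 3 * g 2)⁻¹ }

/-!
Let the generators act on `ℚ⁴`, read as normal-form coordinates `(a, b, c, d) ↔ g₁^a g₂^b g₃^c g₄^d`,
by the formulas for left multiplication that the commutator relations force (moving `g₂` past
`g₁^a` produces the binomial `a(a-1)/2`, hence `ℚ`). That every relator acts trivially is a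
polynomial identity, so `G(t)` acts on `ℚ⁴`; and the normal-form word with exponent vector `a`
moves the origin to `a`, so distinct exponent vectors give distinct elements.
-/

open Equiv

theorem Equiv.Perm.zpow_apply_eq_of_apply_eq_add_one {α : Type*} (σ : Perm α) (f : ℤ → α)
    (hf : ∀ n, σ (f n) = f (n + 1)) (n : ℤ) : (σ ^ n) (f 0) = f n := by
  induction n using Int.induction_on with
  | zero => rfl
  | succ k ih => rw [add_comm, zpow_one_add, Perm.mul_apply, ih, hf, add_comm]
  | pred k ih =>
    apply σ.injective
    rw [← Perm.mul_apply, ← zpow_one_add, add_sub_cancel, ih, hf, sub_add_cancel]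

namespace LengthFour

abbrev Coords : Type := ℚ × ℚ × ℚ × ℚ

/- `σᵢ` is left multiplication by `gᵢ` in normal-form coordinates; the parameters
`r s u v` stand for `t₁₂₃ t₁₂₄ t₁₃₄ t₂₃₄`. -/

variable (r s u v : ℚ)

def σ₁ : Perm Coords where
  toFun := fun (a, b, c, d) => (a + 1, b, c, d)
  invFun := fun (a, b, c, d) => (a - 1, b, c, d)
  left_inv _ := by simp
  right_inv _ := by simp

def σ₂ : Perm Coords where
  toFun := fun (a, b, c, d) =>
    (a, b + 1, c + r * a, d + s * a + u * r * (a * (a - 1) / 2) + v * r * a * b)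
  invFun := fun (a, b, c, d) =>
    (a, b - 1, c - r * a, d - s * a - u * r * (a * (a - 1) / 2) - v * r * a * (b - 1))
  left_inv _ := by ext <;> simp; ring
  right_inv _ := by ext <;> simp; ring

def σ₃ : Perm Coords where
  toFun := fun (a, b, c, d) => (a, b, c + 1, d + u * a + v * b)
  invFun := fun (a, b, c, d) => (a, b, c - 1, d - u * a - v * b)
  left_inv _ := by ext <;> simp; ring
  right_inv _ := by ext <;> simp; ring

def σ₄ : Perm Coords where
  toFun := fun (a, b, c, d) => (a, b, c, d + 1)
  invFun := fun (a, b, c, d) => (a, b, c, d - 1)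
  left_inv _ := by simp
  right_inv _ := by simp

@[simp] lemma σ₁_apply (a b c d : ℚ) : σ₁ (a, b, c, d) = (a + 1, b, c, d) := rfl
@[simp] lemma σ₁_symm_apply (a b c d : ℚ) : σ₁.symm (a, b, c, d) = (a - 1, b, c, d) := rfl

@[simp] lemma σ₂_apply (a b c d : ℚ) : σ₂ r s u v (a, b, c, d) =
    (a, b + 1, c + r * a, d + s * a + u * r * (a * (a - 1) / 2) + v * r * a * b) := rfl
@[simp] lemma σ₂_symm_apply (a b c d : ℚ) : (σ₂ r s u v).symm (a, b, c, d) =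
    (a, b - 1, c - r * a, d - s * a - u * r * (a * (a - 1) / 2) - v * r * a * (b - 1)) := rfl

@[simp] lemma σ₃_apply (a b c d : ℚ) : σ₃ u v (a, b, c, d) = (a, b, c + 1, d + u * a + v * b) :=
  rfl
@[simp] lemma σ₃_symm_apply (a b c d : ℚ) :
    (σ₃ u v).symm (a, b, c, d) = (a, b, c - 1, d - u * a - v * b) := rfl

@[simp] lemma σ₄_apply (a b c d : ℚ) : σ₄ (a, b, c, d) = (a, b, c, d + 1) := rfl
@[simp] lemma σ₄_symm_apply (a b c d : ℚ) : σ₄.symm (a, b, c, d) = (a, b, c, d - 1) := rfl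

lemma σ₁_zpow_apply (n : ℤ) (a b c d : ℚ) : (σ₁ ^ n) (a, b, c, d) = (a + n, b, c, d) := by
  simpa using σ₁.zpow_apply_eq_of_apply_eq_add_one (fun n : ℤ => (a + n, b, c, d))
    (fun n => by simp [add_assoc]) n

lemma σ₂_zpow_apply_zero_fst (n : ℤ) (b c d : ℚ) :
    (σ₂ r s u v ^ n) (0, b, c, d) = (0, b + n, c, d) := by
  simpa using (σ₂ r s u v).zpow_apply_eq_of_apply_eq_add_one (fun n : ℤ => (0, b + n, c, d))
    (fun n => by simp [add_assoc]) n

lemma σ₃_zpow_apply (n : ℤ) (a b c d : ℚ) :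
    (σ₃ u v ^ n) (a, b, c, d) = (a, b, c + n, d + n * (u * a + v * b)) := by
  simpa using (σ₃ u v).zpow_apply_eq_of_apply_eq_add_one
    (fun n : ℤ => (a, b, c + n, d + n * (u * a + v * b))) (fun n => by ext <;> simp <;> ring) n

lemma σ₄_zpow_apply (n : ℤ) (a b c d : ℚ) : (σ₄ ^ n) (a, b, c, d) = (a, b, c, d + n) := by
  simpa using σ₄.zpow_apply_eq_of_apply_eq_add_one (fun n : ℤ => (a, b, c, d + n))
    (fun n => by simp [add_assoc]) n

variable (t123 t124 t134 t234 : ℤ)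

def act : Fin 4 → Perm Coords :=
  ![σ₁, σ₂ t123 t124 t134 t234, σ₃ t134 t234, σ₄]

theorem lift_act_eq_one_of_mem_rels4 :
    ∀ w ∈ rels4 t123 t124 t134 t234, FreeGroup.lift (act t123 t124 t134 t234) w = 1 := by
  rintro w (rfl | rfl | rfl | rfl | rfl | rfl) <;> ext ⟨a, b, c, d⟩ : 1 <;>
    simp [act, σ₃_zpow_apply, σ₄_zpow_apply, -Prod.mk.injEq] <;> ext <;> ring

theorem act_normalForm_apply_zero (a : Fin 4 → ℤ) :
    (act t123 t124 t134 t234 0 ^ a 0 * act t123 t124 t134 t234 1 ^ a 1 *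
      act t123 t124 t134 t234 2 ^ a 2 * act t123 t124 t134 t234 3 ^ a 3) (0, 0, 0, 0) =
      ((a 0 : ℚ), (a 1 : ℚ), (a 2 : ℚ), (a 3 : ℚ)) := by
  simp [act, σ₁_zpow_apply, σ₂_zpow_apply_zero_fst, σ₃_zpow_apply, σ₄_zpow_apply]

end LengthFour

/-- For every `t ∈ ℤ⁴`, the presentation `G(t)` on four generators is consistent:
the normal-form map `ℤ⁴ → G(t)` is injective. -/
theorem consistent_of_length_four (t123 t124 t134 t234 : ℤ) :
    Function.Injective
      (fun a : Fin 4 → ℤ =>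
        ((PresentedGroup.of 0 : PresentedGroup (rels4 t123 t124 t134 t234)) ^ a 0) *
        (PresentedGroup.of 1) ^ a 1 * (PresentedGroup.of 2) ^ a 2 *
        (PresentedGroup.of 3) ^ a 3) := by
  intro a b hab
  let φ := PresentedGroup.toGroup (LengthFour.lift_act_eq_one_of_mem_rels4 t123 t124 t134 t234)
  have h := congrArg (fun g => φ g (0, 0, 0, 0)) hab
  simp only [φ, map_mul, map_zpow, PresentedGroup.toGroup.of,
    LengthFour.act_normalForm_apply_zero, Prod.mk.injEq, Int.cast_inj] at h
  obtain ⟨h0, h1, h2, h3⟩ := h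
  funext i
  fin_cases i <;> assumption
end

section
/- Let G be a group with elements h₁,…,h₅ and integers t_{ijk} (1 ≤ i < j < k ≤ 5) satisfying the listed commutator relations, and suppose the normal-form map ℤ⁵ → G is injective. Then, evaluating the associativity identity (h₄h₂)h₁ = h₄(h₂h₁) via the relations, both sides equal h₁h₂h₃^{t₁₂₃}h₄^{t₁₂₄+1}h₅^{e} for some exponent e, where the left side gives e = t₁₂₅+t₁₄₅+t₂₄₅ and the right side gives e = t₁₂₅+t₁₄₅+t₂₄₅+t₁₂₃t₃₄₅; consequently t₁₂₃·t₃₄₅ = 0. -/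
/-!
Both sides of `(h₄h₂)h₁ = h₄(h₂h₁)` are brought to normal form by the collection process,
pushing the central generator `h₅` to the right. The only difference between the two
collections is that on the right `h₄` has to move past `h₃^{t₁₂₃}`, which by the relation
`h₄h₃ = h₃h₄h₅^{t₃₄₅}` produces the extra factor `h₅^{t₁₂₃t₃₄₅}`. Uniqueness of normal forms
then forces `t₁₂₃t₃₄₅ = 0`.
-/

section

variable {G : Type*} [Group G] {x y z : G}

theorem mul_eq_mul_mul_of_commutator_eq (h : x⁻¹ * y⁻¹ * x * y = z) : x * y = y * x * z := by
  rw [← h]; group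

theorem commute_of_commutator_eq_one (h : x⁻¹ * y⁻¹ * x * y = 1) : Commute x y :=
  (mul_eq_mul_mul_of_commutator_eq h).trans (mul_one _)

theorem mul_zpow_eq_zpow_mul_mul_zpow (hzx : Commute z x) (hyz : Commute y z)
    (h : x * y = y * x * z) (n : ℤ) : x * y ^ n = y ^ n * x * z ^ n := by
  have hconj : x * y * x⁻¹ = y * z := by
    rw [h, mul_assoc y, ← hzx.eq]; group
  calc x * y ^ n = (x * y * x⁻¹) ^ n * x := by rw [conj_zpow]; group
    _ = y ^ n * x * z ^ n := by
      rw [hconj, hyz.mul_zpow, mul_assoc, (hzx.zpow_left n).eq, mul_assoc]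

end

section

variable {G : Type*} [Group G] {h1 h2 h3 h4 h5 : G} {t123 t124 t125 t145 t245 t345 : ℤ}

theorem collect_h4h2_h1
    (s21 : h2 * h1 = h1 * h2 * (h3 ^ t123 * h4 ^ t124 * h5 ^ t125))
    (s41 : h4 * h1 = h1 * h4 * h5 ^ t145) (s42 : h4 * h2 = h2 * h4 * h5 ^ t245)
    (k51 : Commute h5 h1) (k54 : Commute h5 h4) :
    (h4 * h2) * h1
      = h1 * h2 * h3 ^ t123 * h4 ^ (t124 + 1) * h5 ^ (t125 + t145 + t245) := by
  calc (h4 * h2) * h1 = h2 * h4 * h1 * h5 ^ t245 := by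
        rw [s42, (k51.zpow_left _).right_comm]
    _ = h2 * h1 * h4 * h5 ^ t145 * h5 ^ t245 := by
        rw [mul_assoc h2, s41]; group
    _ = h1 * h2 * h3 ^ t123 * h4 ^ t124 * h4 * h5 ^ t125 * h5 ^ t145 * h5 ^ t245 := by
        rw [s21]; simp only [← mul_assoc]; rw [(k54.zpow_left _).right_comm]
    _ = h1 * h2 * h3 ^ t123 * h4 ^ (t124 + 1) * h5 ^ (t125 + t145 + t245) := by
        group

theorem collect_h4_h2h1
    (s21 : h2 * h1 = h1 * h2 * (h3 ^ t123 * h4 ^ t124 * h5 ^ t125))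
    (s41 : h4 * h1 = h1 * h4 * h5 ^ t145) (s42 : h4 * h2 = h2 * h4 * h5 ^ t245)
    (s43 : h4 * h3 = h3 * h4 * h5 ^ t345)
    (k52 : Commute h5 h2) (k53 : Commute h5 h3) (k54 : Commute h5 h4) :
    h4 * (h2 * h1)
      = h1 * h2 * h3 ^ t123 * h4 ^ (t124 + 1)
          * h5 ^ (t125 + t145 + t245 + t123 * t345) := by
  have s43n : h4 * h3 ^ t123 = h3 ^ t123 * h4 * h5 ^ (t345 * t123) := by
    rw [mul_zpow_eq_zpow_mul_mul_zpow (k54.zpow_left _) ((k53.zpow_left _).symm) s43,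
      zpow_mul]
  calc h4 * (h2 * h1)
      = h1 * h4 * h5 ^ t145 * h2 * h3 ^ t123 * h4 ^ t124 * h5 ^ t125 := by
        rw [s21]; simp only [← mul_assoc]; rw [s41]
    _ = h1 * (h4 * h2) * h3 ^ t123 * h4 ^ t124 * h5 ^ t145 * h5 ^ t125 := by
        rw [(k52.zpow_left _).right_comm, ((k53.zpow_left _).zpow_right _).right_comm,
          ((k54.zpow_left _).zpow_right _).right_comm, mul_assoc h1]
    _ = h1 * h2 * (h4 * h3 ^ t123) * h4 ^ t124 * h5 ^ t245 * h5 ^ t145 * h5 ^ t125 := by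
        rw [s42]; simp only [← mul_assoc]
        rw [((k53.zpow_left _).zpow_right _).right_comm,
          ((k54.zpow_left _).zpow_right _).right_comm]
    _ = h1 * h2 * h3 ^ t123 * h4 * h4 ^ t124
          * h5 ^ (t345 * t123) * h5 ^ t245 * h5 ^ t145 * h5 ^ t125 := by
        rw [s43n]; simp only [← mul_assoc]
        rw [((k54.zpow_left _).zpow_right _).right_comm]
    _ = h1 * h2 * h3 ^ t123 * h4 ^ (t124 + 1)
          * h5 ^ (t125 + t145 + t245 + t123 * t345) := by
        group

end

theorem assoc_h4_h2_h1_gives_first_consistency_general (G : Type*) [Group G] (h1 h2 h3 h4 h5 : G)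
    (t123 t124 t125 t145 t245 t345 : ℤ)
    (c21 : h2⁻¹ * h1⁻¹ * h2 * h1 = h3 ^ t123 * h4 ^ t124 * h5 ^ t125)
    (c41 : h4⁻¹ * h1⁻¹ * h4 * h1 = h5 ^ t145)
    (c42 : h4⁻¹ * h2⁻¹ * h4 * h2 = h5 ^ t245)
    (c43 : h4⁻¹ * h3⁻¹ * h4 * h3 = h5 ^ t345)
    (c51 : h5⁻¹ * h1⁻¹ * h5 * h1 = 1)
    (c52 : h5⁻¹ * h2⁻¹ * h5 * h2 = 1)
    (c53 : h5⁻¹ * h3⁻¹ * h5 * h3 = 1)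
    (c54 : h5⁻¹ * h4⁻¹ * h5 * h4 = 1)
    (hinj : Function.Injective
      (fun a : Fin 5 → ℤ => h1 ^ a 0 * h2 ^ a 1 * h3 ^ a 2 * h4 ^ a 3 * h5 ^ a 4)) :
    (h4 * h2) * h1
        = h1 * h2 * h3 ^ t123 * h4 ^ (t124 + 1) * h5 ^ (t125 + t145 + t245) ∧
    h4 * (h2 * h1)
        = h1 * h2 * h3 ^ t123 * h4 ^ (t124 + 1)
            * h5 ^ (t125 + t145 + t245 + t123 * t345) ∧
    t123 * t345 = 0 := by
  have s21 := mul_eq_mul_mul_of_commutator_eq c21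
  have s41 := mul_eq_mul_mul_of_commutator_eq c41
  have s42 := mul_eq_mul_mul_of_commutator_eq c42
  have hleft := collect_h4h2_h1 s21 s41 s42
    (commute_of_commutator_eq_one c51) (commute_of_commutator_eq_one c54)
  have hright := collect_h4_h2h1 s21 s41 s42 (mul_eq_mul_mul_of_commutator_eq c43)
    (commute_of_commutator_eq_one c52) (commute_of_commutator_eq_one c53)
    (commute_of_commutator_eq_one c54)
  refine ⟨hleft, hright, ?_⟩
  have hnf := hleft.symm.trans ((mul_assoc _ _ _).trans hright)
  have hexp := congrFun (hinj (a₁ := ![1, 1, t123, t124 + 1, t125 + t145 + t245])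
    (a₂ := ![1, 1, t123, t124 + 1, t125 + t145 + t245 + t123 * t345]) (by simpa using hnf)) 4
  simpa using hexp

/-- Evaluating the associativity identity `(h₄h₂)h₁ = h₄(h₂h₁)`: both sides have normal
form `h₁h₂h₃^{t₁₂₃}h₄^{t₁₂₄+1}h₅^{e}` with the exhibited exponents `e`, and consequently
`t₁₂₃·t₃₄₅ = 0`. -/
theorem assoc_h4_h2_h1_gives_first_consistency (G : Type*) [Group G] (h1 h2 h3 h4 h5 : G)
    (t123 t124 t125 t134 t135 t145 t234 t235 t245 t345 : ℤ)
    (c21 : h2⁻¹ * h1⁻¹ * h2 * h1 = h3 ^ t123 * h4 ^ t124 * h5 ^ t125)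
    (c31 : h3⁻¹ * h1⁻¹ * h3 * h1 = h4 ^ t134 * h5 ^ t135)
    (c32 : h3⁻¹ * h2⁻¹ * h3 * h2 = h4 ^ t234 * h5 ^ t235)
    (c41 : h4⁻¹ * h1⁻¹ * h4 * h1 = h5 ^ t145)
    (c42 : h4⁻¹ * h2⁻¹ * h4 * h2 = h5 ^ t245)
    (c43 : h4⁻¹ * h3⁻¹ * h4 * h3 = h5 ^ t345)
    (c51 : h5⁻¹ * h1⁻¹ * h5 * h1 = 1)
    (c52 : h5⁻¹ * h2⁻¹ * h5 * h2 = 1)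
    (c53 : h5⁻¹ * h3⁻¹ * h5 * h3 = 1)
    (c54 : h5⁻¹ * h4⁻¹ * h5 * h4 = 1)
    (hinj : Function.Injective
      (fun a : Fin 5 → ℤ => h1 ^ a 0 * h2 ^ a 1 * h3 ^ a 2 * h4 ^ a 3 * h5 ^ a 4)) :
    (h4 * h2) * h1
        = h1 * h2 * h3 ^ t123 * h4 ^ (t124 + 1) * h5 ^ (t125 + t145 + t245) ∧
    h4 * (h2 * h1)
        = h1 * h2 * h3 ^ t123 * h4 ^ (t124 + 1)
            * h5 ^ (t125 + t145 + t245 + t123 * t345) ∧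
    t123 * t345 = 0 :=
  assoc_h4_h2_h1_gives_first_consistency_general G h1 h2 h3 h4 h5 t123 t124 t125 t145 t245 t345 c21
    c41 c42 c43 c51 c52 c53 c54 hinj
end

section
/- Let G be a group with elements h₁,…,h₅ and integers t_{ijk} (1 ≤ i < j < k ≤ 5) satisfying the listed commutator relations, and suppose the normal-form map ℤ⁵ → G is injective. Then, evaluating the associativity identity (h₃h₂)h₁ = h₃(h₂h₁) via the relations and comparing normal forms, one obtains t₁₂₄·t₃₄₅ + t₁₄₅·t₂₃₄ = t₁₃₄·t₂₄₅. -/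
private lemma key1 {G : Type*} [Group G] {a b z : G}
    (hzb : Commute z b) (h : b * a = a * b * z) (m : ℤ) :
    b ^ m * a = a * b ^ m * z ^ m := by
  have hc : a⁻¹ * b * a = b * z := by
    rw [mul_assoc, h]; group
  have h2 : (a⁻¹ * b * a⁻¹⁻¹) ^ m = a⁻¹ * b ^ m * a⁻¹⁻¹ := conj_zpow
  simp only [inv_inv] at h2
  have h4 : a⁻¹ * b ^ m * a = b ^ m * z ^ m := by
    rw [← h2, hc, hzb.symm.mul_zpow m]
  calc b ^ m * a = a * (a⁻¹ * b ^ m * a) := by group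
    _ = a * (b ^ m * z ^ m) := by rw [h4]
    _ = a * b ^ m * z ^ m := by group

private lemma zswap {G : Type*} [Group G] {a b z : G}
    (hza : Commute z a) (hzb : Commute z b) (h : b * a = a * b * z) (m k : ℤ) :
    b ^ m * a ^ k = a ^ k * b ^ m * z ^ (m * k) := by
  have h1 : b ^ m * a = a * b ^ m * z ^ m := key1 hzb h m
  have h2 : a * b ^ m = b ^ m * a * (z ^ m)⁻¹ := by
    rw [h1]; group
  have hz1 : Commute ((z ^ m)⁻¹) a := (hza.zpow_left m).inv_left
  have h3 : a ^ k * b ^ m = b ^ m * a ^ k * ((z ^ m)⁻¹) ^ k := key1 hz1 h2 k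
  have h5 : b ^ m * a ^ k = a ^ k * b ^ m * (((z ^ m)⁻¹) ^ k)⁻¹ := by
    rw [h3]; group
  rw [h5]
  congr 1
  simp only [inv_zpow, ← zpow_neg, ← zpow_mul]
  congr 1
  ring

set_option maxHeartbeats 1600000 in
/-- Evaluating the associativity identity `(h₃h₂)h₁ = h₃(h₂h₁)` and comparing normal forms
yields the second consistency relation `t₁₂₄t₃₄₅ + t₁₄₅t₂₃₄ = t₁₃₄t₂₄₅`. -/
theorem assoc_h3_h2_h1_gives_second_consistency (G : Type*) [Group G] (h1 h2 h3 h4 h5 : G)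
    (t123 t124 t125 t134 t135 t145 t234 t235 t245 t345 : ℤ)
    (c21 : h2⁻¹ * h1⁻¹ * h2 * h1 = h3 ^ t123 * h4 ^ t124 * h5 ^ t125)
    (c31 : h3⁻¹ * h1⁻¹ * h3 * h1 = h4 ^ t134 * h5 ^ t135)
    (c32 : h3⁻¹ * h2⁻¹ * h3 * h2 = h4 ^ t234 * h5 ^ t235)
    (c41 : h4⁻¹ * h1⁻¹ * h4 * h1 = h5 ^ t145)
    (c42 : h4⁻¹ * h2⁻¹ * h4 * h2 = h5 ^ t245)
    (c43 : h4⁻¹ * h3⁻¹ * h4 * h3 = h5 ^ t345)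
    (c51 : h5⁻¹ * h1⁻¹ * h5 * h1 = 1)
    (c52 : h5⁻¹ * h2⁻¹ * h5 * h2 = 1)
    (c53 : h5⁻¹ * h3⁻¹ * h5 * h3 = 1)
    (c54 : h5⁻¹ * h4⁻¹ * h5 * h4 = 1)
    (hinj : Function.Injective
      (fun a : Fin 5 → ℤ => h1 ^ a 0 * h2 ^ a 1 * h3 ^ a 2 * h4 ^ a 3 * h5 ^ a 4)) :
    t124 * t345 + t145 * t234 = t134 * t245 := by
  -- h5 commutes with everything
  have w51 : Commute h5 h1 := by
    have e : h5 * h1 = h1 * h5 * (h5⁻¹ * h1⁻¹ * h5 * h1) := by group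
    rw [c51, mul_one] at e; exact e
  have w52 : Commute h5 h2 := by
    have e : h5 * h2 = h2 * h5 * (h5⁻¹ * h2⁻¹ * h5 * h2) := by group
    rw [c52, mul_one] at e; exact e
  have w53 : Commute h5 h3 := by
    have e : h5 * h3 = h3 * h5 * (h5⁻¹ * h3⁻¹ * h5 * h3) := by group
    rw [c53, mul_one] at e; exact e
  have w54 : Commute h5 h4 := by
    have e : h5 * h4 = h4 * h5 * (h5⁻¹ * h4⁻¹ * h5 * h4) := by group
    rw [c54, mul_one] at e; exact e
  -- basic swap relations
  have r21 : h2 * h1 = h1 * h2 * (h3 ^ t123 * h4 ^ t124 * h5 ^ t125) := by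
    have e : h2 * h1 = h1 * h2 * (h2⁻¹ * h1⁻¹ * h2 * h1) := by group
    rw [c21] at e; exact e
  have r31 : h3 * h1 = h1 * h3 * (h4 ^ t134 * h5 ^ t135) := by
    have e : h3 * h1 = h1 * h3 * (h3⁻¹ * h1⁻¹ * h3 * h1) := by group
    rw [c31] at e; exact e
  have r32 : h3 * h2 = h2 * h3 * (h4 ^ t234 * h5 ^ t235) := by
    have e : h3 * h2 = h2 * h3 * (h3⁻¹ * h2⁻¹ * h3 * h2) := by group
    rw [c32] at e; exact e
  have r41 : h4 * h1 = h1 * h4 * h5 ^ t145 := by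
    have e : h4 * h1 = h1 * h4 * (h4⁻¹ * h1⁻¹ * h4 * h1) := by group
    rw [c41] at e; exact e
  have r42 : h4 * h2 = h2 * h4 * h5 ^ t245 := by
    have e : h4 * h2 = h2 * h4 * (h4⁻¹ * h2⁻¹ * h4 * h2) := by group
    rw [c42] at e; exact e
  have r43 : h4 * h3 = h3 * h4 * h5 ^ t345 := by
    have e : h4 * h3 = h3 * h4 * (h4⁻¹ * h3⁻¹ * h4 * h3) := by group
    rw [c43] at e; exact e
  -- h5-power commutation
  have q1 : ∀ n : ℤ, h5 ^ n * h1 = h1 * h5 ^ n := fun n => (w51.zpow_left n).eq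
  have q2 : ∀ n : ℤ, h5 ^ n * h2 = h2 * h5 ^ n := fun n => (w52.zpow_left n).eq
  have q3 : ∀ n : ℤ, h5 ^ n * h3 = h3 * h5 ^ n := fun n => (w53.zpow_left n).eq
  have q3p : ∀ n k : ℤ, h5 ^ n * h3 ^ k = h3 ^ k * h5 ^ n :=
    fun n k => ((w53.zpow_left n).zpow_right k).eq
  have q4p : ∀ n k : ℤ, h5 ^ n * h4 ^ k = h4 ^ k * h5 ^ n :=
    fun n k => ((w54.zpow_left n).zpow_right k).eq
  have q4 : ∀ n : ℤ, h5 ^ n * h4 = h4 * h5 ^ n := fun n => (w54.zpow_left n).eq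
  -- power swap lemmas
  have s41 : ∀ m : ℤ, h4 ^ m * h1 = h1 * h4 ^ m * h5 ^ (t145 * m) := by
    intro m
    have e := key1 (w54.zpow_left t145) r41 m
    rw [← zpow_mul] at e; exact e
  have s42 : ∀ m : ℤ, h4 ^ m * h2 = h2 * h4 ^ m * h5 ^ (t245 * m) := by
    intro m
    have e := key1 (w54.zpow_left t245) r42 m
    rw [← zpow_mul] at e; exact e
  have s43 : ∀ m k : ℤ, h4 ^ m * h3 ^ k = h3 ^ k * h4 ^ m * h5 ^ (t345 * (m * k)) := by
    intro m k
    have e := zswap (w53.zpow_left t345) (w54.zpow_left t345) r43 m k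
    rw [← zpow_mul] at e; exact e
  have s43m : ∀ m : ℤ, h4 ^ m * h3 = h3 * h4 ^ m * h5 ^ (t345 * m) := by
    intro m
    have e := s43 m 1
    simpa using e
  have s43o : ∀ k : ℤ, h4 * h3 ^ k = h3 ^ k * h4 * h5 ^ (t345 * k) := by
    intro k
    have e := s43 1 k
    simpa using e
  -- Step 1: the auxiliary associativity (h4 h2) h1 = h4 (h2 h1) gives t345 * t123 = 0
  have QA : h4 * h2 * h1 =
      h1 ^ (1:ℤ) * h2 ^ (1:ℤ) * h3 ^ t123 * h4 ^ (1 + t124) *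
        h5 ^ (t345 * t123 + (t245 + (t145 + t125))) := by
    calc h4 * h2 * h1
        = h4 * (h2 * h1) := by group
      _ = h4 * (h1 * h2 * (h3 ^ t123 * h4 ^ t124 * h5 ^ t125)) := by rw [r21]
      _ = (h4 * h1) * (h2 * (h3 ^ t123 * (h4 ^ t124 * h5 ^ t125))) := by group
      _ = (h1 * h4 * h5 ^ t145) * (h2 * (h3 ^ t123 * (h4 ^ t124 * h5 ^ t125))) := by rw [r41]
      _ = h1 * h4 * ((h5 ^ t145 * h2) * (h3 ^ t123 * (h4 ^ t124 * h5 ^ t125))) := by group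
      _ = h1 * h4 * ((h2 * h5 ^ t145) * (h3 ^ t123 * (h4 ^ t124 * h5 ^ t125))) := by rw [q2]
      _ = h1 * ((h4 * h2) * ((h5 ^ t145 * h3 ^ t123) * (h4 ^ t124 * h5 ^ t125))) := by group
      _ = h1 * ((h2 * h4 * h5 ^ t245) * ((h3 ^ t123 * h5 ^ t145) * (h4 ^ t124 * h5 ^ t125))) := by
          rw [r42, q3p]
      _ = h1 * (h2 * (h4 * ((h5 ^ t245 * h3 ^ t123) * (h5 ^ t145 * (h4 ^ t124 * h5 ^ t125))))) := by
          group
      _ = h1 * (h2 * (h4 * ((h3 ^ t123 * h5 ^ t245) * (h5 ^ t145 * (h4 ^ t124 * h5 ^ t125))))) := by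
          rw [q3p]
      _ = h1 * (h2 * ((h4 * h3 ^ t123) * ((h5 ^ (t245 + t145) * h4 ^ t124) * h5 ^ t125))) := by
          group
      _ = h1 * (h2 * ((h3 ^ t123 * h4 * h5 ^ (t345 * t123)) *
            ((h4 ^ t124 * h5 ^ (t245 + t145)) * h5 ^ t125))) := by rw [s43o, q4p]
      _ = h1 * (h2 * (h3 ^ t123 * (h4 * ((h5 ^ (t345 * t123) * h4 ^ t124) *
            (h5 ^ (t245 + t145) * h5 ^ t125))))) := by group
      _ = h1 * (h2 * (h3 ^ t123 * (h4 * ((h4 ^ t124 * h5 ^ (t345 * t123)) *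
            (h5 ^ (t245 + t145) * h5 ^ t125))))) := by rw [q4p]
      _ = h1 ^ (1:ℤ) * h2 ^ (1:ℤ) * h3 ^ t123 * h4 ^ (1 + t124) *
            h5 ^ (t345 * t123 + (t245 + (t145 + t125))) := by group
  have QB : h4 * h2 * h1 =
      h1 ^ (1:ℤ) * h2 ^ (1:ℤ) * h3 ^ t123 * h4 ^ (1 + t124) *
        h5 ^ (t125 + (t145 + t245)) := by
    calc h4 * h2 * h1
        = (h2 * h4 * h5 ^ t245) * h1 := by rw [r42]
      _ = h2 * (h4 * (h5 ^ t245 * h1)) := by group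
      _ = h2 * (h4 * (h1 * h5 ^ t245)) := by rw [q1]
      _ = h2 * ((h4 * h1) * h5 ^ t245) := by group
      _ = h2 * ((h1 * h4 * h5 ^ t145) * h5 ^ t245) := by rw [r41]
      _ = (h2 * h1) * (h4 * (h5 ^ t145 * h5 ^ t245)) := by group
      _ = (h1 * h2 * (h3 ^ t123 * h4 ^ t124 * h5 ^ t125)) *
            (h4 * (h5 ^ t145 * h5 ^ t245)) := by rw [r21]
      _ = h1 * (h2 * (h3 ^ t123 * (h4 ^ t124 * ((h5 ^ t125 * h4) *
            (h5 ^ t145 * h5 ^ t245))))) := by group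
      _ = h1 * (h2 * (h3 ^ t123 * (h4 ^ t124 * ((h4 * h5 ^ t125) *
            (h5 ^ t145 * h5 ^ t245))))) := by rw [q4]
      _ = h1 ^ (1:ℤ) * h2 ^ (1:ℤ) * h3 ^ t123 * h4 ^ (1 + t124) *
            h5 ^ (t125 + (t145 + t245)) := by group
  have hq : t345 * t123 + (t245 + (t145 + t125)) = t125 + (t145 + t245) := by
    have e : (fun a : Fin 5 → ℤ => h1 ^ a 0 * h2 ^ a 1 * h3 ^ a 2 * h4 ^ a 3 * h5 ^ a 4)
          ![1, 1, t123, 1 + t124, t345 * t123 + (t245 + (t145 + t125))] =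
        (fun a : Fin 5 → ℤ => h1 ^ a 0 * h2 ^ a 1 * h3 ^ a 2 * h4 ^ a 3 * h5 ^ a 4)
          ![1, 1, t123, 1 + t124, t125 + (t145 + t245)] := by
      exact QA.symm.trans QB
    have e2 := congrFun (hinj e) 4
    simpa using e2
  have hq' : t345 * t123 = 0 := by linarith
  -- Step 2: the main associativity (h3 h2) h1 = h3 (h2 h1)
  have NA : h3 * h2 * h1 =
      h1 ^ (1:ℤ) * h2 ^ (1:ℤ) * h3 ^ (1 + t123) * h4 ^ ((t234 + t134) + t124) *
        h5 ^ (t345 * ((t234 + t134) * t123) + (t235 + (t245 * t134 + t135)) + t125) := by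
    calc h3 * h2 * h1
        = h3 * (h2 * h1) := by group
      _ = h3 * (h1 * h2 * (h3 ^ t123 * h4 ^ t124 * h5 ^ t125)) := by rw [r21]
      _ = (h3 * h1) * (h2 * (h3 ^ t123 * (h4 ^ t124 * h5 ^ t125))) := by group
      _ = (h1 * h3 * (h4 ^ t134 * h5 ^ t135)) *
            (h2 * (h3 ^ t123 * (h4 ^ t124 * h5 ^ t125))) := by rw [r31]
      _ = h1 * (h3 * (h4 ^ t134 * ((h5 ^ t135 * h2) *
            (h3 ^ t123 * (h4 ^ t124 * h5 ^ t125))))) := by group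
      _ = h1 * (h3 * (h4 ^ t134 * ((h2 * h5 ^ t135) *
            (h3 ^ t123 * (h4 ^ t124 * h5 ^ t125))))) := by rw [q2]
      _ = h1 * (h3 * ((h4 ^ t134 * h2) * ((h5 ^ t135 * h3 ^ t123) *
            (h4 ^ t124 * h5 ^ t125)))) := by group
      _ = h1 * (h3 * ((h2 * h4 ^ t134 * h5 ^ (t245 * t134)) * ((h3 ^ t123 * h5 ^ t135) *
            (h4 ^ t124 * h5 ^ t125)))) := by rw [s42, q3p]
      _ = h1 * ((h3 * h2) * (h4 ^ t134 * ((h5 ^ (t245 * t134) * h3 ^ t123) *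
            (h5 ^ t135 * (h4 ^ t124 * h5 ^ t125))))) := by group
      _ = h1 * ((h2 * h3 * (h4 ^ t234 * h5 ^ t235)) * (h4 ^ t134 *
            ((h3 ^ t123 * h5 ^ (t245 * t134)) *
            (h5 ^ t135 * (h4 ^ t124 * h5 ^ t125))))) := by rw [r32, q3p]
      _ = h1 * (h2 * (h3 * (h4 ^ t234 * ((h5 ^ t235 * h4 ^ t134) * (h3 ^ t123 *
            (h5 ^ (t245 * t134) * (h5 ^ t135 * (h4 ^ t124 * h5 ^ t125)))))))) := by group
      _ = h1 * (h2 * (h3 * (h4 ^ t234 * ((h4 ^ t134 * h5 ^ t235) * (h3 ^ t123 *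
            (h5 ^ (t245 * t134) * (h5 ^ t135 * (h4 ^ t124 * h5 ^ t125)))))))) := by rw [q4p]
      _ = h1 * (h2 * (h3 * (h4 ^ (t234 + t134) * ((h5 ^ t235 * h3 ^ t123) *
            ((h5 ^ (t245 * t134 + t135) * h4 ^ t124) * h5 ^ t125))))) := by group
      _ = h1 * (h2 * (h3 * (h4 ^ (t234 + t134) * ((h3 ^ t123 * h5 ^ t235) *
            ((h4 ^ t124 * h5 ^ (t245 * t134 + t135)) * h5 ^ t125))))) := by rw [q3p, q4p]
      _ = h1 * (h2 * (h3 * ((h4 ^ (t234 + t134) * h3 ^ t123) *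
            ((h5 ^ t235 * h4 ^ t124) * (h5 ^ (t245 * t134 + t135) * h5 ^ t125))))) := by group
      _ = h1 * (h2 * (h3 * ((h3 ^ t123 * h4 ^ (t234 + t134) *
            h5 ^ (t345 * ((t234 + t134) * t123))) *
            ((h4 ^ t124 * h5 ^ t235) * (h5 ^ (t245 * t134 + t135) * h5 ^ t125))))) := by
          rw [s43, q4p]
      _ = h1 * (h2 * (h3 ^ (1 + t123) * (h4 ^ (t234 + t134) *
            ((h5 ^ (t345 * ((t234 + t134) * t123)) * h4 ^ t124) *
            (h5 ^ t235 * (h5 ^ (t245 * t134 + t135) * h5 ^ t125)))))) := by group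
      _ = h1 * (h2 * (h3 ^ (1 + t123) * (h4 ^ (t234 + t134) *
            ((h4 ^ t124 * h5 ^ (t345 * ((t234 + t134) * t123))) *
            (h5 ^ t235 * (h5 ^ (t245 * t134 + t135) * h5 ^ t125)))))) := by rw [q4p]
      _ = h1 ^ (1:ℤ) * h2 ^ (1:ℤ) * h3 ^ (1 + t123) * h4 ^ ((t234 + t134) + t124) *
            h5 ^ (t345 * ((t234 + t134) * t123) + (t235 + (t245 * t134 + t135)) + t125) := by
          group
  have NB : h3 * h2 * h1 =
      h1 ^ (1:ℤ) * h2 ^ (1:ℤ) * h3 ^ (1 + t123) * h4 ^ ((t234 + t134) + t124) *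
        h5 ^ (t345 * t124 + t125 + (t135 + (t145 * t234 + t235))) := by
    calc h3 * h2 * h1
        = (h2 * h3 * (h4 ^ t234 * h5 ^ t235)) * h1 := by rw [r32]
      _ = h2 * (h3 * (h4 ^ t234 * (h5 ^ t235 * h1))) := by group
      _ = h2 * (h3 * (h4 ^ t234 * (h1 * h5 ^ t235))) := by rw [q1]
      _ = h2 * (h3 * ((h4 ^ t234 * h1) * h5 ^ t235)) := by group
      _ = h2 * (h3 * ((h1 * h4 ^ t234 * h5 ^ (t145 * t234)) * h5 ^ t235)) := by rw [s41]
      _ = h2 * ((h3 * h1) * (h4 ^ t234 * (h5 ^ (t145 * t234) * h5 ^ t235))) := by group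
      _ = h2 * ((h1 * h3 * (h4 ^ t134 * h5 ^ t135)) *
            (h4 ^ t234 * (h5 ^ (t145 * t234) * h5 ^ t235))) := by rw [r31]
      _ = (h2 * h1) * (h3 * (h4 ^ t134 * ((h5 ^ t135 * h4 ^ t234) *
            (h5 ^ (t145 * t234) * h5 ^ t235)))) := by group
      _ = (h2 * h1) * (h3 * (h4 ^ t134 * ((h4 ^ t234 * h5 ^ t135) *
            (h5 ^ (t145 * t234) * h5 ^ t235)))) := by rw [q4p]
      _ = (h1 * h2 * (h3 ^ t123 * h4 ^ t124 * h5 ^ t125)) * (h3 * (h4 ^ t134 *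
            ((h4 ^ t234 * h5 ^ t135) * (h5 ^ (t145 * t234) * h5 ^ t235)))) := by rw [r21]
      _ = h1 * (h2 * (h3 ^ t123 * (h4 ^ t124 * ((h5 ^ t125 * h3) * (h4 ^ t134 *
            (h4 ^ t234 * (h5 ^ t135 * (h5 ^ (t145 * t234) * h5 ^ t235)))))))) := by group
      _ = h1 * (h2 * (h3 ^ t123 * (h4 ^ t124 * ((h3 * h5 ^ t125) * (h4 ^ t134 *
            (h4 ^ t234 * (h5 ^ t135 * (h5 ^ (t145 * t234) * h5 ^ t235)))))))) := by rw [q3]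
      _ = h1 * (h2 * (h3 ^ t123 * ((h4 ^ t124 * h3) * (h5 ^ t125 * (h4 ^ t134 *
            (h4 ^ t234 * (h5 ^ t135 * (h5 ^ (t145 * t234) * h5 ^ t235)))))))) := by group
      _ = h1 * (h2 * (h3 ^ t123 * ((h3 * h4 ^ t124 * h5 ^ (t345 * t124)) *
            (h5 ^ t125 * (h4 ^ t134 * (h4 ^ t234 *
            (h5 ^ t135 * (h5 ^ (t145 * t234) * h5 ^ t235)))))))) := by rw [s43m]
      _ = h1 * (h2 * (h3 ^ (1 + t123) * (h4 ^ t124 * ((h5 ^ (t345 * t124 + t125) *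
            h4 ^ (t134 + t234)) *
            (h5 ^ t135 * (h5 ^ (t145 * t234) * h5 ^ t235)))))) := by group
      _ = h1 * (h2 * (h3 ^ (1 + t123) * (h4 ^ t124 * ((h4 ^ (t134 + t234) *
            h5 ^ (t345 * t124 + t125)) *
            (h5 ^ t135 * (h5 ^ (t145 * t234) * h5 ^ t235)))))) := by rw [q4p]
      _ = h1 ^ (1:ℤ) * h2 ^ (1:ℤ) * h3 ^ (1 + t123) * h4 ^ ((t234 + t134) + t124) *
            h5 ^ (t345 * t124 + t125 + (t135 + (t145 * t234 + t235))) := by group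
  have hp : t345 * ((t234 + t134) * t123) + (t235 + (t245 * t134 + t135)) + t125 =
      t345 * t124 + t125 + (t135 + (t145 * t234 + t235)) := by
    have e : (fun a : Fin 5 → ℤ => h1 ^ a 0 * h2 ^ a 1 * h3 ^ a 2 * h4 ^ a 3 * h5 ^ a 4)
          ![1, 1, 1 + t123, (t234 + t134) + t124,
            t345 * ((t234 + t134) * t123) + (t235 + (t245 * t134 + t135)) + t125] =
        (fun a : Fin 5 → ℤ => h1 ^ a 0 * h2 ^ a 1 * h3 ^ a 2 * h4 ^ a 3 * h5 ^ a 4)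
          ![1, 1, 1 + t123, (t234 + t134) + t124,
            t345 * t124 + t125 + (t135 + (t145 * t234 + t235))] := by
      exact NA.symm.trans NB
    have e2 := congrFun (hinj e) 4
    simpa using e2
  linear_combination (t234 + t134) * hq' - hp
end
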